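/- Let $f\in\mathcal{C}^r([0,1]^s)$, $r\geq 1$, $k\geq r$, and suppose $\widehat D^\alpha_k f(c)$ are numerical derivatives satisfying $|\widehat D^\alpha_k f(c)-D^\alpha f(c)|\leq C_{|\alpha|,s}\|f\|_r k^{-(r-|\alpha|)}$ for all multi-indices $|\alpha|<r$ and all $c\in\mathfrak{C}_k$. Define $h_{k,c}(u)=\bar h_{k,c}(u)-\mathbb{E}[\bar h_{k,c}(U_c)]$, where $\bar h_{k,c}(u)=f(c+u)-\sum_{1\leq|\alpha|\leq r-1}\frac{\widehat D^\alpha_k f(c)}{\alpha!}\left(u^\alpha-\prod_{j=1}^s d_k(\alpha_j)\right)$ and $d_k(i)=\mathbb{E}[V^i]$ for $V\sim\mathcal{U}([-1/(2k),1/(2k)])$. Then there exists $\widehat C_{s,r}<\infty$, independent of $k$ and $f$, such that $\max_{c\in\mathfrak{C}_k}\sup_{u\in[-1/(2k),1/(2k)]^s}|h_{k,c}(u)|\leq\widehat C_{s,r}\|f\|_r k^{-r}$. -/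

import Mathlib

/-!
Since `U_c` is a probability measure on the cube `|u_i| ≤ 1/(2k)`, `|h_{k,c}(u)|` is at most the
oscillation `sup_v |h̄_{k,c}(u) - h̄_{k,c}(v)|`, in which the constants `∏ d_k(α_j)` cancel. It thus
suffices to bound `f(c + w) - f(c) - ∑_{1 ≤ |α| < r} D̂^α_k f(c) w^α / α!` for `|w_i| ≤ 1/(2k)`.
Taylor's theorem along the segment from `c` to `c + w` bounds `f(c + w)` minus its exact Taylor
polynomial of degree `r - 1` by `s^r (2k)^{-r} ‖f‖_r`, and replacing `D^α f(c)` by `D̂^α_k f(c)`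
costs at most `s^l (2k)^{-l} C_l ‖f‖_r k^{-(r-l)} ≤ s^l C_l ‖f‖_r k^{-r}` at level `l = |α|`.

Derivatives are iterated Fréchet derivatives: `D^α f(c)` is the `l`-th derivative applied to the
basis vectors `e_{m_1}, …, e_{m_l}` for any word `m` whose letter counts `multiIndex m` are `α`,
and `α` is the multi-index of exactly `l! / α!` words.
-/

open MeasureTheory

/-- `d_k(i) = E[V^i]` for `V ~ U([-1/(2k), 1/(2k)])`. -/
noncomputable def dk (k i : ℕ) : ℝ :=
  if Even i then 1 / ((i + 1 : ℝ) * (2 * (k : ℝ)) ^ i) else 0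

/-- The uniform distribution on the cube `[-1/(2k), 1/(2k)]^s`. -/
noncomputable def cubeMeasure (s k : ℕ) : Measure (Fin s → ℝ) :=
  Measure.pi fun _ : Fin s =>
    (volume (Set.Icc (-(1 / (2 * (k : ℝ)))) (1 / (2 * (k : ℝ)))))⁻¹ •
      volume.restrict (Set.Icc (-(1 / (2 * (k : ℝ)))) (1 / (2 * (k : ℝ))))

/-- `h̄_{k,c}(u) = f(c+u) - ∑_{1 ≤ |α| ≤ r-1} (D̂^α_k f(c)/α!)(u^α - ∏_j d_k(α_j))`. -/
noncomputable def hbar (s r k : ℕ) (f : (Fin s → ℝ) → ℝ)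
    (Dhat : (Fin s → ℕ) → (Fin s → ℝ) → ℝ) (c u : Fin s → ℝ) : ℝ :=
  f (c + u) -
    ∑ l ∈ Finset.Icc 1 (r - 1), ∑ α ∈ Finset.Nat.antidiagonalTuple s l,
      Dhat α c / ((∏ i, (α i).factorial : ℕ) : ℝ) *
        ((∏ i, u i ^ α i) - ∏ i, dk k (α i))

open Finset
open scoped Nat

section MultiIndex

variable {ι σ : Type*} [Fintype ι] [DecidableEq σ]

def multiIndex (m : ι → σ) (i : σ) : ℕ := #{p | m p = i}

theorem sum_multiIndex [Fintype σ] (m : ι → σ) : ∑ i, multiIndex m i = Fintype.card ι :=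
  (card_eq_sum_card_fiberwise fun p _ => mem_univ (m p)).symm

theorem prod_pow_multiIndex [Fintype σ] {M : Type*} [CommMonoid M] (x : σ → M) (m : ι → σ) :
    ∏ i, x i ^ multiIndex m i = ∏ p, x (m p) := by
  rw [← prod_fiberwise univ m fun p => x (m p)]
  refine prod_congr rfl fun i _ => ?_
  rw [prod_congr rfl fun p hp => congrArg x (mem_filter.mp hp).2, prod_const]
  rfl

theorem card_multiIndex_eq [Fintype σ] {l : ℕ} {α : σ → ℕ} (hα : ∑ i, α i = l) :
    #{m : Fin l → σ | multiIndex m = α} = Nat.multinomial univ α := by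
  -- Compare the coefficients of `X^α` in `(∑ i, X i) ^ l = ∑ m, ∏ p, X (m p)`.
  open MvPolynomial in
  have hpow : (∑ i, X i : MvPolynomial σ ℕ) ^ l =
      ∑ m : Fin l → σ, monomial (Finsupp.equivFunOnFinite.symm (multiIndex m)) 1 := by
    rw [← Fin.prod_const, prod_univ_sum]
    refine sum_congr (by simp) fun m _ => ?_
    rw [← prod_pow_multiIndex, monomial_eq, Finsupp.prod_fintype _ _ (by simp)]
    simp
  have hcoeff := congrArg (MvPolynomial.coeff (Finsupp.equivFunOnFinite.symm α)) hpow
  rw [MvPolynomial.coeff_sum_X_pow_of_fintype, MvPolynomial.coeff_sum,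
    Finsupp.sum_fintype _ _ fun _ => rfl] at hcoeff
  simp only [MvPolynomial.coeff_monomial, EmbeddingLike.apply_eq_iff_eq,
    Finsupp.coe_equivFunOnFinite_symm, hα, if_true,
    Finsupp.multinomial_eq_of_support_subset (subset_univ _)] at hcoeff
  rw [card_filter]
  exact_mod_cast hcoeff.symm

theorem sum_antidiagonalTuple_div_factorial {s l : ℕ} (G : (Fin s → ℕ) → ℝ) :
    ∑ α ∈ Nat.antidiagonalTuple s l, G α / ((∏ i, (α i)! : ℕ) : ℝ) =
      (l ! : ℝ)⁻¹ * ∑ m : Fin l → Fin s, G (multiIndex m) := by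
  rw [← sum_fiberwise_of_maps_to (t := Nat.antidiagonalTuple s l) (g := multiIndex)
    fun m _ => Nat.mem_antidiagonalTuple.mpr ((sum_multiIndex m).trans (Fintype.card_fin l)),
    mul_sum]
  refine sum_congr rfl fun α hα => ?_
  have hαl : ∑ i, α i = l := Nat.mem_antidiagonalTuple.mp hα
  rw [sum_congr rfl fun m hm => by rw [(mem_filter.mp hm).2], sum_const, card_multiIndex_eq hαl,
    nsmul_eq_mul]
  have hspec : ((∏ i, (α i)! : ℕ) : ℝ) * Nat.multinomial univ α = l ! := by
    exact_mod_cast hαl ▸ Nat.multinomial_spec univ α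
  have hfac : (l ! : ℝ) ≠ 0 := by positivity
  field_simp
  rw [← hspec]
  ring

end MultiIndex

theorem MultilinearMap.apply_const_eq_sum {R ι σ : Type*} [CommSemiring R] [Fintype ι]
    [DecidableEq ι] [Fintype σ] [DecidableEq σ] (F : MultilinearMap R (fun _ : ι => σ → R) R)
    (u : σ → R) :
    F (fun _ => u) = ∑ m : ι → σ, (∏ p, u (m p)) * F (fun p => Pi.single (m p) 1) := by
  conv_lhs => rw [← univ_sum_single u]
  rw [F.map_sum]
  refine sum_congr rfl fun m _ => ?_
  rw [← smul_eq_mul, ← F.map_smul_univ]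
  congr 1
  funext p
  rw [← Pi.single_smul', smul_eq_mul, mul_one]

theorem abs_sum_prod_mul_le {σ : Type*} [Fintype σ] {l : ℕ} {w : σ → ℝ} {a : ℝ}
    (hw : ∀ i, |w i| ≤ a) {X : (Fin l → σ) → ℝ} {ε : ℝ} (hX : ∀ m, |X m| ≤ ε) :
    |∑ m : Fin l → σ, (∏ p, w (m p)) * X m| ≤ (Fintype.card σ : ℝ) ^ l * a ^ l * ε := by
  have hterm (m : Fin l → σ) : |(∏ p, w (m p)) * X m| ≤ a ^ l * ε := by
    have hprod : |∏ p, w (m p)| ≤ a ^ l := by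
      rw [abs_prod]
      exact (prod_le_prod (fun p _ => abs_nonneg _) fun p _ => hw (m p)).trans_eq (by simp)
    rw [abs_mul]
    exact mul_le_mul hprod (hX m) (abs_nonneg _) ((abs_nonneg _).trans hprod)
  calc |∑ m : Fin l → σ, (∏ p, w (m p)) * X m|
      ≤ ∑ _m : Fin l → σ, a ^ l * ε :=
        (abs_sum_le_sum_abs _ _).trans (sum_le_sum fun m _ => hterm m)
    _ = (Fintype.card σ : ℝ) ^ l * a ^ l * ε := by simp [mul_assoc]

theorem abs_inv_factorial_mul_sub_sum_le {s l : ℕ}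
    (F : ContinuousMultilinearMap ℝ (fun _ : Fin l => Fin s → ℝ) ℝ) (Dh : (Fin s → ℕ) → ℝ)
    {w : Fin s → ℝ} {a : ℝ} (hw : ∀ i, |w i| ≤ a) {ε : ℝ}
    (hF : ∀ m : Fin l → Fin s, |Dh (multiIndex m) - F (fun p => Pi.single (m p) 1)| ≤ ε) :
    |(l ! : ℝ)⁻¹ * F (fun _ => w) -
        ∑ α ∈ Nat.antidiagonalTuple s l, Dh α / ((∏ i, (α i)! : ℕ) : ℝ) * ∏ i, w i ^ α i|
      ≤ s ^ l * a ^ l * ε := by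
  have hsum : ∑ α ∈ Nat.antidiagonalTuple s l, Dh α / ((∏ i, (α i)! : ℕ) : ℝ) * ∏ i, w i ^ α i =
      (l ! : ℝ)⁻¹ * ∑ m : Fin l → Fin s, (∏ p, w (m p)) * Dh (multiIndex m) := by
    simp_rw [div_mul_eq_mul_div]
    rw [sum_antidiagonalTuple_div_factorial fun α => Dh α * ∏ i, w i ^ α i]
    simp_rw [prod_pow_multiIndex, mul_comm]
  have hinv : |(l ! : ℝ)⁻¹| ≤ 1 := by
    rw [abs_of_nonneg (by positivity)]
    exact inv_le_one_of_one_le₀ (by exact_mod_cast l.factorial_pos)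
  have hbound := abs_sum_prod_mul_le hw
    (X := fun m => F (fun p => Pi.single (m p) 1) - Dh (multiIndex m))
    fun m => by rw [abs_sub_comm]; exact hF m
  rw [Fintype.card_fin] at hbound
  have hexp : F (fun _ => w) =
      ∑ m : Fin l → Fin s, (∏ p, w (m p)) * F (fun p => Pi.single (m p) 1) :=
    F.toMultilinearMap.apply_const_eq_sum w
  rw [hsum, hexp, ← mul_sub, ← sum_sub_distrib, abs_mul]
  simp_rw [← mul_sub]
  exact (mul_le_of_le_one_left (abs_nonneg _) hinv).trans hbound

section Segment

variable {E F : Type*} [NormedAddCommGroup E] [NormedSpace ℝ E] [NormedAddCommGroup F]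
  [NormedSpace ℝ F] {S : Set E} {f : E → F} {c u : E}

theorem iteratedDerivWithin_comp_add_smul {n : ℕ} (hS : UniqueDiffOn ℝ S)
    (hf : ContDiffOn ℝ n f S) (hseg : ∀ t ∈ Set.Icc (0 : ℝ) 1, c + t • u ∈ S) {l : ℕ}
    (hl : l ≤ n) {t : ℝ} (ht : t ∈ Set.Icc (0 : ℝ) 1) :
    iteratedDerivWithin l (fun t => f (c + t • u)) (Set.Icc 0 1) t =
      iteratedFDerivWithin ℝ l f S (c + t • u) (fun _ => u) := by
  induction l generalizing t with
  | zero => simp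
  | succ l ih =>
    have hl' : l ≤ n := l.le_succ.trans hl
    rw [iteratedDerivWithin_succ, derivWithin_congr (fun y hy => ih hl' hy) (ih hl' ht)]
    have hline : HasDerivWithinAt (fun t : ℝ => c + t • u) u (Set.Icc 0 1) t := by
      simpa using ((hasDerivWithinAt_id t _).smul_const u).const_add c
    have hderiv := ((hf.differentiableOn_iteratedFDerivWithin (by exact_mod_cast hl) hS
      (c + t • u) (hseg t ht)).hasFDerivWithinAt.comp_hasDerivWithinAt t hline hseg)
    have happ : HasDerivWithinAt (fun t => iteratedFDerivWithin ℝ l f S (c + t • u) (fun _ => u))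
        (fderivWithin ℝ (iteratedFDerivWithin ℝ l f S) S (c + t • u) u (fun _ => u))
        (Set.Icc 0 1) t :=
      (ContinuousMultilinearMap.apply ℝ (fun _ : Fin l => E) F
        (fun _ => u)).hasFDerivAt.comp_hasDerivWithinAt t hderiv
    rw [happ.derivWithin ((uniqueDiffOn_Icc zero_lt_one).uniqueDiffWithinAt ht),
      iteratedFDerivWithin_succ_apply_left]
    rfl

theorem norm_sub_sum_iteratedFDerivWithin_le {n : ℕ} (hS : UniqueDiffOn ℝ S)
    (hf : ContDiffOn ℝ (n + 1) f S) (hseg : ∀ t ∈ Set.Icc (0 : ℝ) 1, c + t • u ∈ S) {B : ℝ}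
    (hB : ∀ t ∈ Set.Icc (0 : ℝ) 1,
      ‖iteratedFDerivWithin ℝ (n + 1) f S (c + t • u) (fun _ => u)‖ ≤ B) :
    ‖f (c + u) - ∑ l ∈ range (n + 1), (l ! : ℝ)⁻¹ • iteratedFDerivWithin ℝ l f S c (fun _ => u)‖
      ≤ B / n ! := by
  have hf' : ContDiffOn ℝ (n + 1 : ℕ) f S := by exact_mod_cast hf
  have hg : ContDiffOn ℝ (n + 1) (fun t : ℝ => f (c + t • u)) (Set.Icc 0 1) :=
    hf.comp (contDiff_const.add (contDiff_id.smul contDiff_const)).contDiffOn hseg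
  have htaylor := taylor_mean_remainder_bound zero_le_one hg (Set.right_mem_Icc.mpr zero_le_one)
    fun t ht => (iteratedDerivWithin_comp_add_smul hS hf' hseg le_rfl ht).symm ▸ hB t ht
  have h0 : (0 : ℝ) ∈ Set.Icc (0 : ℝ) 1 := Set.left_mem_Icc.mpr zero_le_one
  rw [taylor_within_apply, sum_congr rfl fun l hl => by
    rw [iteratedDerivWithin_comp_add_smul hS hf' hseg (mem_range.mp hl).le h0]] at htaylor
  simpa using htaylor

end Segment

theorem abs_sub_sum_iteratedFDerivWithin_le {s n : ℕ} {f : (Fin s → ℝ) → ℝ}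
    (hf : ContDiffOn ℝ (n + 1) f (Set.Icc 0 1)) {M : ℝ}
    (hM : ∀ x ∈ Set.Icc (0 : Fin s → ℝ) 1, ∀ m : Fin (n + 1) → Fin s,
      |iteratedFDerivWithin ℝ (n + 1) f (Set.Icc 0 1) x (fun p => Pi.single (m p) 1)| ≤ M)
    {c w : Fin s → ℝ} {a : ℝ} (hw : ∀ i, |w i| ≤ a) (hc : c ∈ Set.Icc 0 1)
    (hcw : c + w ∈ Set.Icc 0 1) :
    |f (c + w) - ∑ l ∈ range (n + 1),
        (l ! : ℝ)⁻¹ • iteratedFDerivWithin ℝ l f (Set.Icc 0 1) c (fun _ => w)|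
      ≤ s ^ (n + 1) * a ^ (n + 1) * M := by
  have hS : UniqueDiffOn ℝ (Set.Icc (0 : Fin s → ℝ) 1) := by
    rw [← Set.pi_univ_Icc]
    exact UniqueDiffOn.univ_pi fun _ => uniqueDiffOn_Icc zero_lt_one
  have hseg (t : ℝ) (ht : t ∈ Set.Icc (0 : ℝ) 1) : c + t • w ∈ Set.Icc 0 1 :=
    (convex_Icc 0 1).add_smul_mem hc hcw ht
  have hB (t : ℝ) (ht : t ∈ Set.Icc (0 : ℝ) 1) :
      ‖iteratedFDerivWithin ℝ (n + 1) f (Set.Icc 0 1) (c + t • w) (fun _ => w)‖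
        ≤ s ^ (n + 1) * a ^ (n + 1) * M := by
    have hexp := (iteratedFDerivWithin ℝ (n + 1) f (Set.Icc 0 1)
      (c + t • w)).toMultilinearMap.apply_const_eq_sum w
    have hbound := abs_sum_prod_mul_le hw (hM _ (hseg t ht))
    rw [Fintype.card_fin] at hbound
    rw [Real.norm_eq_abs]
    exact hexp ▸ hbound
  rw [← Real.norm_eq_abs]
  exact (norm_sub_sum_iteratedFDerivWithin_le hS hf hseg hB).trans
    (div_le_self ((norm_nonneg _).trans (hB 0 (Set.left_mem_Icc.mpr zero_le_one)))
      (by exact_mod_cast n.factorial_pos))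

theorem norm_sub_integral_le {α E : Type*} [MeasurableSpace α] [NormedAddCommGroup E]
    [NormedSpace ℝ E] [CompleteSpace E] {μ : Measure α} [IsProbabilityMeasure μ] {h : α → E}
    (hh : AEStronglyMeasurable h μ) {y : E} {D : ℝ} (hD : ∀ᵐ v ∂μ, ‖y - h v‖ ≤ D) :
    ‖y - ∫ v, h v ∂μ‖ ≤ D := by
  have hint : Integrable h μ := Integrable.of_bound hh (‖y‖ + D) <| hD.mono fun v hv => by
    linarith [norm_sub_norm_le (h v) y, norm_sub_rev (h v) y]
  have hmean : y - ∫ v, h v ∂μ = ∫ v, (y - h v) ∂μ := by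
    rw [integral_sub (integrable_const y) hint, integral_const, probReal_univ, one_smul]
  rw [hmean]
  simpa using norm_integral_le_of_norm_le_const hD

section CubeMeasure

open ProbabilityTheory

theorem cubeMeasure_eq_pi_cond (s k : ℕ) :
    cubeMeasure s k =
      Measure.pi fun _ : Fin s => volume[|Set.Icc (-(1 / (2 * (k : ℝ)))) (1 / (2 * (k : ℝ)))] :=
  rfl

theorem isProbabilityMeasure_cubeMeasure {s k : ℕ} (hk : k ≠ 0) :
    IsProbabilityMeasure (cubeMeasure s k) := by
  have : IsProbabilityMeasure volume[|Set.Icc (-(1 / (2 * (k : ℝ)))) (1 / (2 * (k : ℝ)))] :=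
    cond_isProbabilityMeasure_of_finite (by simp [Real.volume_Icc]; positivity)
      (by simp [Real.volume_Icc])
  rw [cubeMeasure_eq_pi_cond]
  infer_instance

theorem ae_mem_cubeMeasure (s k : ℕ) :
    ∀ᵐ v ∂cubeMeasure s k,
      v ∈ Set.univ.pi fun _ => Set.Icc (-(1 / (2 * (k : ℝ)))) (1 / (2 * (k : ℝ))) := by
  simp only [Set.mem_univ_pi, cubeMeasure_eq_pi_cond]
  exact ae_all_iff.mpr fun i =>
    (Measure.quasiMeasurePreserving_eval _ i).ae (ae_cond_mem measurableSet_Icc)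

end CubeMeasure

noncomputable def numericalTaylorPoly (s r : ℕ) (Dhat : (Fin s → ℕ) → (Fin s → ℝ) → ℝ)
    (c w : Fin s → ℝ) : ℝ :=
  ∑ l ∈ Icc 1 (r - 1), ∑ α ∈ Nat.antidiagonalTuple s l,
    Dhat α c / ((∏ i, (α i)! : ℕ) : ℝ) * ∏ i, w i ^ α i

theorem hbar_sub_hbar (s r k : ℕ) (f : (Fin s → ℝ) → ℝ)
    (Dhat : (Fin s → ℕ) → (Fin s → ℝ) → ℝ) (c u v : Fin s → ℝ) :
    hbar s r k f Dhat c u - hbar s r k f Dhat c v =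
      (f (c + u) - numericalTaylorPoly s r Dhat c u) -
        (f (c + v) - numericalTaylorPoly s r Dhat c v) := by
  simp only [hbar, numericalTaylorPoly, mul_sub, sum_sub_distrib]
  ring

theorem abs_sub_numericalTaylorPoly_le {s r : ℕ} (hr : 1 ≤ r) {f : (Fin s → ℝ) → ℝ}
    (hf : ContDiffOn ℝ r f (Set.Icc 0 1)) {M : ℝ}
    (hM : ∀ x ∈ Set.Icc (0 : Fin s → ℝ) 1, ∀ m : Fin r → Fin s,
      |iteratedFDerivWithin ℝ r f (Set.Icc 0 1) x (fun p => Pi.single (m p) 1)| ≤ M)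
    {Dhat : (Fin s → ℕ) → (Fin s → ℝ) → ℝ} {c : Fin s → ℝ} {ε : ℕ → ℝ}
    (hD : ∀ l < r, ∀ m : Fin l → Fin s,
      |Dhat (multiIndex m) c -
        iteratedFDerivWithin ℝ l f (Set.Icc 0 1) c (fun p => Pi.single (m p) 1)| ≤ ε l)
    {w : Fin s → ℝ} {a : ℝ} (hw : ∀ i, |w i| ≤ a) (hc : c ∈ Set.Icc 0 1)
    (hcw : c + w ∈ Set.Icc 0 1) :
    |f (c + w) - f c - numericalTaylorPoly s r Dhat c w|
      ≤ s ^ r * a ^ r * M + ∑ l ∈ Icc 1 (r - 1), s ^ l * a ^ l * ε l := by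
  obtain ⟨n, rfl⟩ : ∃ n, r = n + 1 := ⟨r - 1, by omega⟩
  set S : Set (Fin s → ℝ) := Set.Icc 0 1
  have htaylor := abs_sub_sum_iteratedFDerivWithin_le (by exact_mod_cast hf) hM hw hc hcw
  have hsplit : ∑ l ∈ range (n + 1), (l ! : ℝ)⁻¹ • iteratedFDerivWithin ℝ l f S c (fun _ => w) =
      f c + ∑ l ∈ Icc 1 n, (l ! : ℝ)⁻¹ * iteratedFDerivWithin ℝ l f S c (fun _ => w) := by
    rw [range_eq_Ico, sum_eq_sum_Ico_succ_bot n.succ_pos, zero_add, Nat.succ_eq_add_one,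
      Ico_add_one_right_eq_Icc]
    simp
  have hlevel (l : ℕ) (hl : l ∈ Icc 1 n) :
      |(l ! : ℝ)⁻¹ * iteratedFDerivWithin ℝ l f S c (fun _ => w) -
          ∑ α ∈ Nat.antidiagonalTuple s l, Dhat α c / ((∏ i, (α i)! : ℕ) : ℝ) * ∏ i, w i ^ α i|
        ≤ s ^ l * a ^ l * ε l :=
    abs_inv_factorial_mul_sub_sum_le _ _ hw (hD l (by simp at hl; omega))
  have hdecomp : f (c + w) - f c - numericalTaylorPoly s (n + 1) Dhat c w =
      (f (c + w) - ∑ l ∈ range (n + 1), (l ! : ℝ)⁻¹ • iteratedFDerivWithin ℝ l f S c (fun _ => w))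
        + ∑ l ∈ Icc 1 n, ((l ! : ℝ)⁻¹ * iteratedFDerivWithin ℝ l f S c (fun _ => w) -
          ∑ α ∈ Nat.antidiagonalTuple s l,
            Dhat α c / ((∏ i, (α i)! : ℕ) : ℝ) * ∏ i, w i ^ α i) := by
    rw [hsplit, sum_sub_distrib, numericalTaylorPoly, Nat.add_sub_cancel]
    ring
  rw [hdecomp, Nat.add_sub_cancel]
  exact (abs_add_le _ _).trans
    (add_le_add htaylor ((abs_sum_le_sum_abs _ _).trans (sum_le_sum hlevel)))

theorem abs_hbar_sub_integral_le {s r k : ℕ} (hk : k ≠ 0) (hr : 1 ≤ r)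
    {f : (Fin s → ℝ) → ℝ} (hf : ContDiffOn ℝ r f (Set.Icc 0 1)) {M : ℝ}
    (hM : ∀ x ∈ Set.Icc (0 : Fin s → ℝ) 1, ∀ m : Fin r → Fin s,
      |iteratedFDerivWithin ℝ r f (Set.Icc 0 1) x (fun p => Pi.single (m p) 1)| ≤ M)
    {Dhat : (Fin s → ℕ) → (Fin s → ℝ) → ℝ} {c : Fin s → ℝ} {ε : ℕ → ℝ}
    (hD : ∀ l < r, ∀ m : Fin l → Fin s,
      |Dhat (multiIndex m) c -
        iteratedFDerivWithin ℝ l f (Set.Icc 0 1) c (fun p => Pi.single (m p) 1)| ≤ ε l)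
    (hc : ∀ w : Fin s → ℝ, (∀ i, |w i| ≤ 1 / (2 * (k : ℝ))) → c + w ∈ Set.Icc 0 1)
    {u : Fin s → ℝ} (hu : ∀ i, |u i| ≤ 1 / (2 * (k : ℝ))) :
    |hbar s r k f Dhat c u - ∫ v, hbar s r k f Dhat c v ∂cubeMeasure s k|
      ≤ 2 * (s ^ r * (1 / (2 * (k : ℝ))) ^ r * M +
        ∑ l ∈ Icc 1 (r - 1), s ^ l * (1 / (2 * (k : ℝ))) ^ l * ε l) := by
  have := isProbabilityMeasure_cubeMeasure (s := s) hk
  set a : ℝ := 1 / (2 * (k : ℝ))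
  set Q : Set (Fin s → ℝ) := Set.univ.pi fun _ => Set.Icc (-a) a
  have hQ (v : Fin s → ℝ) (hv : v ∈ Q) (i : Fin s) : |v i| ≤ a :=
    abs_le.mpr (Set.mem_univ_pi.mp hv i)
  have hR (w : Fin s → ℝ) (hw : ∀ i, |w i| ≤ a) :=
    abs_sub_numericalTaylorPoly_le hr hf hM hD hw
      (by simpa using hc 0 fun _ => by simp [a]) (hc w hw)
  have hcont : ContinuousOn (hbar s r k f Dhat c) Q :=
    (hf.continuousOn.comp (by fun_prop) fun v hv => hc v (hQ v hv)).sub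
      (Continuous.continuousOn (by fun_prop))
  have hmeas : AEStronglyMeasurable (hbar s r k f Dhat c) (cubeMeasure s k) := by
    rw [← Measure.restrict_eq_self_of_ae_mem (ae_mem_cubeMeasure s k)]
    exact hcont.aestronglyMeasurable (MeasurableSet.univ_pi fun _ => measurableSet_Icc)
  rw [← Real.norm_eq_abs]
  refine norm_sub_integral_le hmeas ((ae_mem_cubeMeasure s k).mono fun v hv => ?_)
  have hRu := abs_le.mp (hR u hu)
  have hRv := abs_le.mp (hR v (hQ v hv))
  rw [Real.norm_eq_abs, hbar_sub_hbar, abs_le]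
  constructor <;> linarith

theorem centre_add_mem_Icc {s k : ℕ} (j : Fin s → Fin k) {w : Fin s → ℝ}
    (hw : ∀ i, |w i| ≤ 1 / (2 * (k : ℝ))) :
    (fun i => (2 * ((j i : ℕ) : ℝ) + 1) / (2 * (k : ℝ))) + w ∈ Set.Icc 0 1 := by
  refine ⟨fun i => ?_, fun i => ?_⟩ <;>
  · have hk : (0 : ℝ) < k := by exact_mod_cast (j i).pos
    have hj : ((j i : ℕ) : ℝ) / k + 1 / k ≤ 1 := by
      rw [← add_div, div_le_one hk]
      exact_mod_cast (j i).isLt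
    have hcentre : (2 * ((j i : ℕ) : ℝ) + 1) / (2 * k) = ((j i : ℕ) : ℝ) / k + 1 / (2 * k) := by
      field_simp
    have hhalf : 1 / (k : ℝ) = 1 / (2 * k) + 1 / (2 * k) := by
      field_simp
      norm_num
    have hj0 : 0 ≤ ((j i : ℕ) : ℝ) / k := by positivity
    obtain ⟨hlo, hhi⟩ := abs_le.mp (hw i)
    simp only [Pi.add_apply, Pi.zero_apply, Pi.one_apply, hcentre]
    linarith

theorem one_div_two_mul_pow_mul_inv_pow_le {k : ℝ} (hk : 0 < k) {l r : ℕ} (hl : l ≤ r) :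
    (1 / (2 * k)) ^ l * (k ^ (r - l))⁻¹ ≤ (k ^ r)⁻¹ := by
  obtain ⟨d, rfl⟩ := Nat.exists_eq_add_of_le hl
  rw [Nat.add_sub_cancel_left, pow_add, mul_inv, ← inv_pow k l]
  gcongr
  rw [one_div]
  gcongr
  linarith

theorem error_sum_le_const_mul_inv_pow {s r : ℕ} {k M : ℝ} (hk : 0 < k) (hM : 0 ≤ M)
    (C : ℕ → ℝ) :
    2 * (s ^ r * (1 / (2 * k)) ^ r * M +
        ∑ l ∈ Icc 1 (r - 1), s ^ l * (1 / (2 * k)) ^ l * (C l * M * (k ^ (r - l))⁻¹))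
      ≤ 2 * ((s : ℝ) ^ r + ∑ l ∈ Icc 1 (r - 1), (s : ℝ) ^ l * |C l|) * M * (k ^ r)⁻¹ := by
  have htop : (s : ℝ) ^ r * (1 / (2 * k)) ^ r * M ≤ s ^ r * (M * (k ^ r)⁻¹) := by
    have := one_div_two_mul_pow_mul_inv_pow_le hk le_rfl (r := r)
    rw [Nat.sub_self, pow_zero, inv_one, mul_one] at this
    rw [mul_assoc, mul_comm M]
    gcongr
  have hlevel (l : ℕ) (hl : l ∈ Icc 1 (r - 1)) :
      (s : ℝ) ^ l * (1 / (2 * k)) ^ l * (C l * M * (k ^ (r - l))⁻¹)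
        ≤ s ^ l * |C l| * (M * (k ^ r)⁻¹) := by
    have := one_div_two_mul_pow_mul_inv_pow_le hk (l := l) (r := r) (by simp at hl; omega)
    calc (s : ℝ) ^ l * (1 / (2 * k)) ^ l * (C l * M * (k ^ (r - l))⁻¹)
        = s ^ l * (C l * M) * ((1 / (2 * k)) ^ l * (k ^ (r - l))⁻¹) := by ring
      _ ≤ s ^ l * (|C l| * M) * (k ^ r)⁻¹ := by gcongr; exact le_abs_self _
      _ = s ^ l * |C l| * (M * (k ^ r)⁻¹) := by ring
  calc _ ≤ 2 * (s ^ r * (M * (k ^ r)⁻¹) + ∑ l ∈ Icc 1 (r - 1), s ^ l * |C l| * (M * (k ^ r)⁻¹)) :=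
        mul_le_mul_of_nonneg_left (add_le_add htop (sum_le_sum hlevel)) zero_le_two
    _ = _ := by rw [← sum_mul]; ring

/-- Key lemma (Lemma `main`): if `f ∈ C^r([0,1]^s)` with `r`-th derivatives bounded by `M`
and the numerical derivatives `D̂^α_k f(c)` satisfy
`|D̂^α_k f(c) - D^α f(c)| ≤ C_{|α|} M k^{-(r-|α|)}` at every centre `c` of the
stratification for all `|α| < r`, then there is a constant `Ĉ_{s,r} < ∞`, independent of
`k` and `f`, such that `h_{k,c}(u) = h̄_{k,c}(u) - E[h̄_{k,c}(U_c)]` satisfies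
`|h_{k,c}(u)| ≤ Ĉ_{s,r} M k^{-r}` for all centres `c` and all `u ∈ [-1/(2k), 1/(2k)]^s`. -/
theorem stmt_14 (s r : ℕ) (hs : 1 ≤ s) (hr : 1 ≤ r) (C : ℕ → ℝ) :
    ∃ Chat : ℝ, ∀ k : ℕ, r ≤ k →
      ∀ f : (Fin s → ℝ) → ℝ, ContDiffOn ℝ (r : ℕ∞) f (Set.Icc 0 1) →
      ∀ M : ℝ,
      (∀ x ∈ Set.Icc (0 : Fin s → ℝ) 1, ∀ m : Fin r → Fin s,
        |iteratedFDerivWithin ℝ r f (Set.Icc 0 1) x (fun p => Pi.single (m p) 1)| ≤ M) →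
      ∀ Dhat : (Fin s → ℕ) → (Fin s → ℝ) → ℝ,
      (∀ l : ℕ, l < r → ∀ α ∈ Finset.Nat.antidiagonalTuple s l,
        ∀ j : Fin s → Fin k, ∀ m : Fin l → Fin s,
        (∀ i : Fin s, (Finset.univ.filter fun p => m p = i).card = α i) →
        |Dhat α (fun i => (2 * ((j i : ℕ) : ℝ) + 1) / (2 * (k : ℝ))) -
            iteratedFDerivWithin ℝ l f (Set.Icc 0 1)
              (fun i => (2 * ((j i : ℕ) : ℝ) + 1) / (2 * (k : ℝ)))
              (fun p => Pi.single (m p) 1)|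
          ≤ C l * M * ((k : ℝ) ^ (r - l))⁻¹) →
      ∀ j : Fin s → Fin k, ∀ u : Fin s → ℝ, (∀ i, |u i| ≤ 1 / (2 * (k : ℝ))) →
      |hbar s r k f Dhat (fun i => (2 * ((j i : ℕ) : ℝ) + 1) / (2 * (k : ℝ))) u -
          ∫ v, hbar s r k f Dhat
            (fun i => (2 * ((j i : ℕ) : ℝ) + 1) / (2 * (k : ℝ))) v ∂(cubeMeasure s k)|
        ≤ Chat * M * ((k : ℝ) ^ r)⁻¹ := by
  refine ⟨2 * ((s : ℝ) ^ r + ∑ l ∈ Icc 1 (r - 1), (s : ℝ) ^ l * |C l|),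
    fun k hk f hf M hM Dhat hD j u hu => ?_⟩
  have hkpos : (0 : ℝ) < k := by exact_mod_cast hr.trans hk
  have hM0 : 0 ≤ M := (abs_nonneg _).trans (hM 0 ⟨le_rfl, zero_le_one⟩ fun _ => ⟨0, hs⟩)
  refine (abs_hbar_sub_integral_le (by omega) hr (by exact_mod_cast hf) hM
    (ε := fun l => C l * M * ((k : ℝ) ^ (r - l))⁻¹)
    (fun l hl m => hD l hl _ (Nat.mem_antidiagonalTuple.mpr ((sum_multiIndex m).trans
      (Fintype.card_fin l))) j m fun _ => rfl)
    (fun _ hw => centre_add_mem_Icc j hw) hu).trans ?_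
  exact error_sum_le_const_mul_inv_pow hkpos hM0 C
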